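/- If I is a nowhere tall fragmented ideal on ω, then I is gradually fragmented (witnessed by a fragmentation into singletons) and I is one of the following: (i) I = {x ⊆ ω : x ⊆* A} for some A ⊆ ω, or (ii) I is the ideal generated by some infinite partition of ω into infinite sets together with the finite sets. -/

import Mathlib

/-!
Let `w n` be the `φ_i`-submeasure of `{n}` for the piece `a_i ∋ n`. By monotonicity `w` is bounded
on every member of `I`. Conversely every sublevel set `X = {w ≤ K}` lies in `I`: otherwise `I ↾ X`
is tall, since every infinite `Y ⊆ X` contains an infinite set meeting each piece in at most one
point, and all `φ_i`-values of such a set are at most `K`. Hence `I` is the ideal of sets on which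
`g = ⌈w⌉₊` is bounded, which is fragmented into singletons by `ψ_i x = g i · [i ∈ x]`, trivially
gradually. If only finitely many values of `g`, all at most `K`, have infinite fibres, then
`I = {x | x ⊆* {g ≤ K}}`; otherwise grouping the fibres of `g` into blocks, each ending at one of
those values, gives the partition.
-/

open Set Filter Cardinal

/-- `I` is an ideal on `ω`: contains all finite sets, downward closed, closed under unions. -/
def IsIdealOn (I : Set (Set ℕ)) : Prop :=
  (∀ x : Set ℕ, x.Finite → x ∈ I) ∧
  (∀ x y : Set ℕ, x ⊆ y → y ∈ I → x ∈ I) ∧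
  (∀ x y : Set ℕ, x ∈ I → y ∈ I → x ∪ y ∈ I)

/-- The pair `⟨A, B⟩` is `I`-orthogonal. -/
def IOrthogonal (I A B : Set (Set ℕ)) : Prop := ∀ s ∈ A, ∀ t ∈ B, s ∩ t ∈ I

/-- `C` separates the pair `⟨A, B⟩` with respect to `I`. -/
def ISeparates (I A B : Set (Set ℕ)) (C : Set ℕ) : Prop :=
  (∀ s ∈ A, s ∩ C ∈ I) ∧ (∀ t ∈ B, t \ C ∈ I)

/-- The pair `⟨A, B⟩` is an `I`-gap. -/
def IsIGap (I A B : Set (Set ℕ)) : Prop :=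
  IOrthogonal I A B ∧ ∀ C : Set ℕ, ¬ ISeparates I A B C

/-- There is an `I`-(ω, lam)-gap. -/
def HasOmegaGap (I : Set (Set ℕ)) (lam : Cardinal) : Prop :=
  ∃ A B : Set (Set ℕ), IsIGap I A B ∧ #A = ℵ₀ ∧ #B = lam

/-- `a` is a partition of `ω` into nonempty finite sets. -/
def IsPartitionFin (a : ℕ → Set ℕ) : Prop :=
  (∀ i, (a i).Nonempty) ∧ (∀ i, (a i).Finite) ∧
  (∀ i j, i ≠ j → Disjoint (a i) (a j)) ∧ (⋃ i, a i) = Set.univ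

/-- `φ` is a submeasure on the powerset of the set `s`. -/
def IsSubmeasureOn (s : Set ℕ) (φ : Set ℕ → ℝ) : Prop :=
  φ ∅ = 0 ∧ (∀ x, x ⊆ s → 0 ≤ φ x) ∧
  (∀ x y, x ⊆ y → y ⊆ s → φ x ≤ φ y) ∧
  (∀ x y, x ⊆ s → y ⊆ s → φ (x ∪ y) ≤ φ x + φ y)

/-- `I = I⟨a_i, φ_i⟩` is the fragmented ideal determined by the partition `a`
and the submeasures `φ`. -/
def IsFragmentation (I : Set (Set ℕ)) (a : ℕ → Set ℕ) (φ : ℕ → Set ℕ → ℝ) : Prop :=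
  IsPartitionFin a ∧ (∀ i, IsSubmeasureOn (a i) (φ i)) ∧
  ∀ x : Set ℕ, x ∈ I ↔ ∃ K : ℝ, ∀ i, φ i (x ∩ a i) ≤ K

/-- Gradual fragmentation of `⟨a_i, φ_i⟩`. -/
def GraduallyFragmented (a : ℕ → Set ℕ) (φ : ℕ → Set ℕ → ℝ) : Prop :=
  ∀ k : ℕ, ∃ m : ℕ, ∀ l : ℕ, ∀ᶠ i in atTop,
    ∀ B : Finset (Set ℕ), (∀ b ∈ B, b ⊆ a i) → B.card ≤ l →
      (∀ b ∈ B, φ i b ≤ (k : ℝ)) → φ i (⋃₀ (↑B : Set (Set ℕ))) ≤ (m : ℝ)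

/-- The restriction `I ↾ X` is tall. -/
def IsTallOn (I : Set (Set ℕ)) (X : Set ℕ) : Prop :=
  ∀ Y : Set ℕ, Y ⊆ X → Y.Infinite → ∃ Z, Z ⊆ Y ∧ Z.Infinite ∧ Z ∈ I

def IsTall (I : Set (Set ℕ)) : Prop := IsTallOn I Set.univ

def SomewhereTall (I : Set (Set ℕ)) : Prop := ∃ X : Set ℕ, X ∉ I ∧ IsTallOn I X

def NowhereTall (I : Set (Set ℕ)) : Prop := ¬ SomewhereTall I

/-- The unbounding number `𝔟`. -/
noncomputable def unboundingNumber : Cardinal :=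
  sInf {c | ∃ F : Set (ℕ → ℕ), #F = c ∧
    ∀ g : ℕ → ℕ, ∃ f ∈ F, ¬ ∀ᶠ i in atTop, f i ≤ g i}

/-- The additivity of the Lebesgue-null ideal, `add(N)`. -/
noncomputable def addNull : Cardinal :=
  sInf {c | ∃ F : Set (Set ℝ), #F = c ∧ (∀ s ∈ F, MeasureTheory.volume s = 0) ∧
    MeasureTheory.volume (⋃₀ F) ≠ 0}

def boundedIdeal (g : ℕ → ℕ) : Set (Set ℕ) := {x | BddAbove (g '' x)}

theorem BddAbove.image_of_diff_finite {g : ℕ → ℕ} {A x : Set ℕ} (hA : BddAbove (g '' A))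
    (hx : (x \ A).Finite) : BddAbove (g '' x) := by
  refine (hA.union (hx.image g).bddAbove).mono ?_
  rw [← image_union, union_sdiff_self]
  exact image_mono subset_union_right

theorem bddAbove_natCeil_image_iff {c : ℕ → ℝ} {x : Set ℕ} :
    BddAbove ((fun n => ⌈c n⌉₊) '' x) ↔ ∃ K : ℝ, ∀ n ∈ x, c n ≤ K := by
  simp only [bddAbove_def, forall_mem_image]
  constructor
  · rintro ⟨N, hN⟩
    exact ⟨N, fun n hn => (Nat.le_ceil _).trans (by exact_mod_cast hN hn)⟩
  · rintro ⟨K, hK⟩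
    exact ⟨⌈K⌉₊, fun n hn => Nat.ceil_mono (hK n hn)⟩

namespace IsPartitionFin

variable {a : ℕ → Set ℕ}

theorem exists_mem (ha : IsPartitionFin a) (n : ℕ) : ∃ i, n ∈ a i := by
  simpa using ha.2.2.2.ge (mem_univ n)

theorem eq_of_mem (ha : IsPartitionFin a) {n i j : ℕ} (hi : n ∈ a i) (hj : n ∈ a j) : i = j := by
  by_contra h
  exact disjoint_left.1 (ha.2.2.1 i j h) hi hj

theorem exists_infinite_subset_subsingleton_inter (ha : IsPartitionFin a) {Y : Set ℕ}
    (hY : Y.Infinite) : ∃ Z ⊆ Y, Z.Infinite ∧ ∀ i, (Z ∩ a i).Subsingleton := by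
  set S := {i | (Y ∩ a i).Nonempty}
  have hmin : ∀ i ∈ S, sInf (Y ∩ a i) ∈ Y ∩ a i := fun i hi => Nat.sInf_mem hi
  refine ⟨(fun i => sInf (Y ∩ a i)) '' S, image_subset_iff.2 fun i hi => (hmin i hi).1, ?_, ?_⟩
  · have hS : S.Infinite := by
      refine fun hS => hY <| (hS.biUnion fun i _ => ha.2.1 i).subset fun n hn => ?_
      obtain ⟨i, hi⟩ := ha.exists_mem n
      exact mem_biUnion (show i ∈ S from ⟨n, hn, hi⟩) hi
    refine hS.image fun i hi j hj hij => ha.eq_of_mem (hmin i hi).2 ?_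
    exact (congrArg (· ∈ a j) hij).mpr (hmin j hj).2
  · rintro i _ ⟨⟨j, hj, rfl⟩, hji⟩ _ ⟨⟨k, hk, rfl⟩, hki⟩
    obtain rfl := ha.eq_of_mem (hmin j hj).2 hji
    obtain rfl := ha.eq_of_mem (hmin k hk).2 hki
    rfl

end IsPartitionFin

namespace IsFragmentation

variable {I : Set (Set ℕ)} {a : ℕ → Set ℕ} {φ : ℕ → Set ℕ → ℝ}

theorem mem_of_subset (h : IsFragmentation I a φ) {x y : Set ℕ} (hxy : x ⊆ y) (hy : y ∈ I) :
    x ∈ I := by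
  obtain ⟨K, hK⟩ := (h.2.2 y).1 hy
  exact (h.2.2 x).2 ⟨K, fun i =>
    ((h.2.1 i).2.2.1 _ _ (inter_subset_inter_left _ hxy) inter_subset_right).trans (hK i)⟩

theorem exists_singleton_le_of_mem (h : IsFragmentation I a φ) {x : Set ℕ} (hx : x ∈ I) :
    ∃ K, ∀ i, ∀ n ∈ x ∩ a i, φ i {n} ≤ K := by
  obtain ⟨K, hK⟩ := (h.2.2 x).1 hx
  refine ⟨K, fun i n hn => ((h.2.1 i).2.2.1 _ _ ?_ inter_subset_right).trans (hK i)⟩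
  exact singleton_subset_iff.2 hn

theorem mem_of_subsingleton_inter (h : IsFragmentation I a φ) {Z : Set ℕ} {K : ℝ}
    (hZ : ∀ i, (Z ∩ a i).Subsingleton) (hK : ∀ i, ∀ n ∈ Z ∩ a i, φ i {n} ≤ K) : Z ∈ I := by
  refine (h.2.2 Z).2 ⟨max K 0, fun i => ?_⟩
  rcases (hZ i).eq_empty_or_singleton with hempty | ⟨n, hn⟩
  · rw [hempty, (h.2.1 i).1]
    exact le_max_right _ _
  · rw [hn]
    exact (hK i n (hn ▸ rfl)).trans (le_max_left _ _)

/-- If `{n | φ(n) ≤ K}` were `I`-positive, `I` would be tall on it. -/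
theorem mem_of_singleton_le (h : IsFragmentation I a φ) (hnt : NowhereTall I) {x : Set ℕ}
    {K : ℝ} (hK : ∀ i, ∀ n ∈ x ∩ a i, φ i {n} ≤ K) : x ∈ I := by
  set X := {n | ∀ i, n ∈ a i → φ i {n} ≤ K}
  suffices X ∈ I from h.mem_of_subset (fun n hn i hi => hK i n ⟨hn, hi⟩) this
  by_contra hX
  refine hnt ⟨X, hX, fun Y hYX hY => ?_⟩
  obtain ⟨Z, hZY, hZ, hZa⟩ := h.1.exists_infinite_subset_subsingleton_inter hY
  exact ⟨Z, hZY, hZ, h.mem_of_subsingleton_inter hZa fun i n hn => hYX (hZY hn.1) i hn.2⟩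

theorem exists_eq_boundedIdeal_of_nowhereTall (h : IsFragmentation I a φ) (hnt : NowhereTall I) :
    ∃ g, I = boundedIdeal g := by
  choose piece hpiece using h.1.exists_mem
  set w : ℕ → ℝ := fun n => φ (piece n) {n}
  have hw : ∀ i, ∀ n ∈ a i, φ i {n} = w n := fun i n hn => by
    rw [h.1.eq_of_mem hn (hpiece n)]
  refine ⟨fun n => ⌈w n⌉₊, Set.ext fun x => ?_⟩
  rw [boundedIdeal, mem_ofPred_eq, bddAbove_natCeil_image_iff]
  constructor
  · intro hx
    obtain ⟨K, hK⟩ := h.exists_singleton_le_of_mem hx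
    exact ⟨K, fun n hn => hK _ n ⟨hn, hpiece n⟩⟩
  · rintro ⟨K, hK⟩
    exact h.mem_of_singleton_le hnt fun i n hn => (hw i n hn.2).trans_le (hK n hn.1)

end IsFragmentation

noncomputable def diracSubmeasure (g : ℕ → ℕ) (i : ℕ) (x : Set ℕ) : ℝ :=
  x.indicator (fun n => (g n : ℝ)) i

theorem isSubmeasureOn_diracSubmeasure (g : ℕ → ℕ) (i : ℕ) (s : Set ℕ) :
    IsSubmeasureOn s (diracSubmeasure g i) := by
  have hg : ∀ n, (0 : ℝ) ≤ g n := fun n => Nat.cast_nonneg _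
  refine ⟨indicator_of_notMem (notMem_empty i) _, fun x _ => indicator_nonneg (fun n _ => hg n) i,
    fun x y hxy _ => indicator_le_indicator_apply_of_subset hxy (hg i), fun x y _ _ => ?_⟩
  have hunion := indicator_union_add_inter_apply (fun n => (g n : ℝ)) x y i
  have hinter : (0 : ℝ) ≤ (x ∩ y).indicator (fun n => (g n : ℝ)) i :=
    indicator_nonneg (fun n _ => hg n) i
  unfold diracSubmeasure
  linarith

theorem isFragmentation_boundedIdeal (g : ℕ → ℕ) :
    IsFragmentation (boundedIdeal g) (fun i => {i}) (diracSubmeasure g) := by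
  refine ⟨⟨fun i => singleton_nonempty i, fun i => finite_singleton i,
    fun i j hij => disjoint_singleton.2 hij, iUnion_of_singleton ℕ⟩,
    fun i => isSubmeasureOn_diracSubmeasure g i {i}, fun x => ?_⟩
  have hinter : ∀ i, diracSubmeasure g i (x ∩ {i}) = diracSubmeasure g i x := fun i => by
    by_cases hi : i ∈ x <;> simp [diracSubmeasure, hi]
  simp only [hinter, boundedIdeal, mem_ofPred_eq, bddAbove_def, forall_mem_image]
  constructor
  · rintro ⟨N, hN⟩
    exact ⟨N, fun i => indicator_apply_le' (fun hi => by exact_mod_cast hN hi)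
      fun _ => Nat.cast_nonneg N⟩
  · rintro ⟨K, hK⟩
    refine ⟨⌈K⌉₊, fun n hn => ?_⟩
    have hgn : (g n : ℝ) ≤ K := by simpa only [diracSubmeasure, indicator_of_mem hn] using hK n
    exact_mod_cast hgn.trans (Nat.le_ceil K)

theorem graduallyFragmented_diracSubmeasure (a : ℕ → Set ℕ) (g : ℕ → ℕ) :
    GraduallyFragmented a (diracSubmeasure g) := by
  refine fun k => ⟨k, fun l => Eventually.of_forall fun i B _ _ hB => ?_⟩
  by_cases hi : i ∈ ⋃₀ (↑B : Set (Set ℕ))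
  · obtain ⟨b, hb, hib⟩ := hi
    simpa only [diracSubmeasure, indicator_of_mem hib, indicator_of_mem (mem_sUnion_of_mem hib hb)]
      using hB b hb
  · rw [diracSubmeasure, indicator_of_notMem hi]
    exact Nat.cast_nonneg k

theorem boundedIdeal_eq_almost_subset {g : ℕ → ℕ} {K : ℕ}
    (hfin : ∀ k, K < k → (g ⁻¹' {k}).Finite) :
    boundedIdeal g = {x | (x \ {n | g n ≤ K}).Finite} := by
  ext x
  constructor
  · rintro ⟨N, hN⟩
    refine ((finite_Ioc K N).biUnion fun k hk => hfin k hk.1).subset fun n ⟨hnx, hnK⟩ => ?_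
    exact mem_biUnion ⟨lt_of_not_ge hnK, hN (mem_image_of_mem g hnx)⟩ rfl
  · exact BddAbove.image_of_diff_finite ⟨K, forall_mem_image.2 fun n hn => hn⟩

theorem boundedIdeal_eq_finite_diff_fibers (h : ℕ → ℕ) :
    boundedIdeal h = {x | ∃ F : Finset ℕ, (x \ ⋃ n ∈ F, h ⁻¹' {n}).Finite} := by
  ext x
  simp only [Finset.set_biUnion_preimage_singleton]
  constructor
  · rintro ⟨N, hN⟩
    refine ⟨Finset.range (N + 1), finite_empty.subset fun n ⟨hnx, hn⟩ => hn ?_⟩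
    simpa [Nat.lt_succ_iff] using hN (mem_image_of_mem h hnx)
  · rintro ⟨F, hF⟩
    exact BddAbove.image_of_diff_finite (F.finite_toSet.bddAbove.mono (image_preimage_subset _ _)) hF

section count

variable {p : ℕ → Prop} [DecidablePred p]

theorem boundedIdeal_count_comp (hp : {k | p k}.Infinite) (g : ℕ → ℕ) :
    boundedIdeal (Nat.count p ∘ g) = boundedIdeal g := by
  ext x
  constructor
  · rintro ⟨N, hN⟩
    exact ⟨Nat.nth p N, forall_mem_image.2 fun n hn =>
      (Nat.count_le_iff_le_nth hp).1 (hN (mem_image_of_mem _ hn))⟩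
  · rintro ⟨N, hN⟩
    exact ⟨Nat.count p N, forall_mem_image.2 fun n hn =>
      Nat.count_monotone p (hN (mem_image_of_mem g hn))⟩

theorem infinite_count_comp_preimage_singleton (hp : {k | p k}.Infinite) {g : ℕ → ℕ}
    (hfib : ∀ k, p k → (g ⁻¹' {k}).Infinite) (n : ℕ) :
    ((Nat.count p ∘ g) ⁻¹' {n}).Infinite := by
  refine (hfib _ (Nat.nth_mem_of_infinite hp n)).mono fun m hm => ?_
  rw [mem_preimage, mem_singleton_iff] at hm ⊢
  rw [Function.comp_apply, hm, Nat.count_nth_of_infinite hp]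

end count

/-- In the second case the blocks `(tₙ₋₁, tₙ]` between consecutive values `t₀ < t₁ < ⋯` with
infinite fibres are the fibres of `Nat.count`, so the pieces are the fibres of `Nat.count _ ∘ g`. -/
theorem boundedIdeal_eq_almost_subset_or_partition (g : ℕ → ℕ) :
    (∃ A : Set ℕ, boundedIdeal g = {x | (x \ A).Finite}) ∨
    ∃ P : ℕ → Set ℕ, (∀ n, (P n).Infinite) ∧ (∀ n m, n ≠ m → Disjoint (P n) (P m)) ∧
      (⋃ n, P n) = Set.univ ∧
      boundedIdeal g = {x | ∃ F : Finset ℕ, (x \ ⋃ n ∈ F, P n).Finite} := by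
  classical
  by_cases hT : {k | (g ⁻¹' {k}).Infinite}.Finite
  · obtain ⟨K, hK⟩ := hT.bddAbove
    exact .inl ⟨_, boundedIdeal_eq_almost_subset fun k hk =>
      not_infinite.1 fun hinf => hk.not_ge (hK hinf)⟩
  · set h := Nat.count (fun k => (g ⁻¹' {k}).Infinite) ∘ g
    refine .inr ⟨fun n => h ⁻¹' {n}, infinite_count_comp_preimage_singleton hT fun _ hk => hk,
      fun n m hnm => (disjoint_singleton.2 hnm).preimage h,
      eq_univ_of_forall fun m => mem_iUnion.2 ⟨h m, rfl⟩, ?_⟩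
    rw [← boundedIdeal_count_comp hT g, boundedIdeal_eq_finite_diff_fibers]

/-- If `I` is a nowhere tall fragmented ideal on `ω`, then `I` admits a fragmentation
into singletons which is gradually fragmented, and `I` is either of the form
`{x : x ⊆* A}` for some `A ⊆ ω`, or the ideal generated by an infinite partition of `ω`
into infinite sets (together with the finite sets). -/
theorem nowhere_tall_fragmented_char
    (a : ℕ → Set ℕ) (φ : ℕ → Set ℕ → ℝ) (I : Set (Set ℕ))
    (hfrag : IsFragmentation I a φ)
    (hnt : NowhereTall I) :
    (∃ ψ : ℕ → Set ℕ → ℝ,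
      IsFragmentation I (fun i => {i}) ψ ∧ GraduallyFragmented (fun i => {i}) ψ) ∧
    ((∃ A : Set ℕ, I = {x : Set ℕ | (x \ A).Finite}) ∨
     (∃ P : ℕ → Set ℕ,
        (∀ n, (P n).Infinite) ∧
        (∀ n m, n ≠ m → Disjoint (P n) (P m)) ∧
        (⋃ n, P n) = Set.univ ∧
        I = {x : Set ℕ | ∃ F : Finset ℕ, (x \ ⋃ n ∈ F, P n).Finite})) := by
  obtain ⟨g, rfl⟩ := hfrag.exists_eq_boundedIdeal_of_nowhereTall hnt
  exact ⟨⟨diracSubmeasure g, isFragmentation_boundedIdeal g,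
    graduallyFragmented_diracSubmeasure _ g⟩, boundedIdeal_eq_almost_subset_or_partition g⟩
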